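/- arXiv:2002.03101 — 2 statements merged into one kernel-verified Lean document; each statement's English description precedes it below -/
import Mathlib

section
/- Let R be a unital ring with involution * and nontrivial symmetric idempotent e, and let Δ : R → R be a *-reverse derivable map with Δ(e) = 0. Then Δ maps R₂₁ = (1−e)Re into R₁₂ = eR(1−e): for every x with x = (1−e)xe one has Δ(x) = eΔ(x)(1−e). -/
/-! An `x ∈ (1 - e)Re` satisfies `xe = x` and `ex = 0`. The reverse Leibniz rule applied to `Δ(xe)`,
with `Δ(e) = 0`, gives `Δ(x) = eΔ(x)`; applied to `Δ(ex) = Δ(0) = 0` it gives `Δ(x)e = 0`.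
Together, `Δ(x) = eΔ(x)(1 - e)`. -/

section ReverseDerivable

variable {R : Type*} [Ring R] {σ Δ : R → R}

def IsReverseDerivable (σ Δ : R → R) : Prop :=
  ∀ a b : R, Δ (a * b) = Δ b * σ a + σ b * Δ a

namespace IsReverseDerivable

theorem map_zero (hΔ : IsReverseDerivable σ Δ) (hσ0 : σ 0 = 0) : Δ 0 = 0 := by
  simpa [hσ0] using hΔ 0 0

theorem eq_mul_left_of_mul_eq {e x : R} (hΔ : IsReverseDerivable σ Δ) (hes : σ e = e)
    (hΔe : Δ e = 0) (hxe : x * e = x) : Δ x = e * Δ x :=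
  calc Δ x = Δ (x * e) := by rw [hxe]
    _ = e * Δ x := by rw [hΔ, hΔe, zero_mul, hes, zero_add]

theorem mul_eq_zero_of_mul_eq_zero {e x : R} (hΔ : IsReverseDerivable σ Δ) (hσ0 : σ 0 = 0)
    (hes : σ e = e) (hΔe : Δ e = 0) (hex : e * x = 0) : Δ x * e = 0 :=
  calc Δ x * e = Δ (e * x) := by rw [hΔ, hes, hΔe, mul_zero, add_zero]
    _ = 0 := by rw [hex, hΔ.map_zero hσ0]

end IsReverseDerivable

end ReverseDerivable

namespace IsIdempotentElem

variable {R : Type*} [Ring R] {e x : R}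

theorem mul_self_of_eq_one_sub_mul_mul (he : IsIdempotentElem e) (hx : x = (1 - e) * x * e) :
    x * e = x := by
  rw [hx, mul_assoc, he.eq]

theorem self_mul_eq_zero_of_eq_one_sub_mul_mul (he : IsIdempotentElem e)
    (hx : x = (1 - e) * x * e) : e * x = 0 := by
  rw [hx, ← mul_assoc, ← mul_assoc, he.mul_one_sub_self, zero_mul, zero_mul]

end IsIdempotentElem

theorem delta_maps_R21_to_R12_general {R : Type*} [Ring R]
    (σ : R → R)
    (hσadd : ∀ x y : R, σ (x + y) = σ x + σ y)
    (e : R) (he : e * e = e) (hes : σ e = e)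
    (Δ : R → R)
    (hΔ : ∀ a b : R, Δ (a * b) = Δ b * σ a + σ b * Δ a)
    (hΔe : Δ e = 0) :
    ∀ x : R, x = (1 - e) * x * e → Δ x = e * Δ x * (1 - e) := by
  intro x hx
  have hΔ' : IsReverseDerivable σ Δ := hΔ
  have hσ0 : σ 0 = 0 := (AddMonoidHom.mk' σ hσadd).map_zero
  have hleft : Δ x = e * Δ x :=
    hΔ'.eq_mul_left_of_mul_eq hes hΔe (IsIdempotentElem.mul_self_of_eq_one_sub_mul_mul he hx)
  have hright : Δ x * e = 0 :=
    hΔ'.mul_eq_zero_of_mul_eq_zero hσ0 hes hΔe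
      (IsIdempotentElem.self_mul_eq_zero_of_eq_one_sub_mul_mul he hx)
  rw [mul_sub, mul_one, ← hleft, hright, sub_zero]

theorem delta_maps_R21_to_R12 {R : Type*} [Ring R]
    (σ : R → R)
    (hσadd : ∀ x y : R, σ (x + y) = σ x + σ y)
    (hσinv : ∀ x : R, σ (σ x) = x)
    (hσmul : ∀ x y : R, σ (x * y) = σ y * σ x)
    (e : R) (he : e * e = e) (hes : σ e = e) (he0 : e ≠ 0) (he1 : e ≠ 1)
    (Δ : R → R)
    (hΔ : ∀ a b : R, Δ (a * b) = Δ b * σ a + σ b * Δ a)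
    (hΔe : Δ e = 0) :
    ∀ x : R, x = (1 - e) * x * e → Δ x = e * Δ x * (1 - e) :=
  delta_maps_R21_to_R12_general σ hσadd e he hes Δ hΔ hΔe
end

section
/- Let R be a unital ring with involution * containing a nontrivial symmetric idempotent e, satisfying: (M1) xR = 0 implies x = 0, and (M3) exe·R·(1−e) = 0 implies exe = 0. Let Δ : R → R be a *-reverse derivable map with Δ(e) = 0. Then Δ is additive on Re: for all a, b ∈ Re (i.e. a = ae, b = be), Δ(a + b) = Δ(a) + Δ(b). -/
/-!
Write `Δ` for a `*`-reverse derivable map and `e` for a star projection with `Δ e = 0`.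
Multiplying by the self-adjoint elements `e` and `1 - e` (both killed by `Δ`) acts on `Δ` as
multiplication on the other side, so `Δ x = Δ (e * x) + Δ ((1 - e) * x)`, and it suffices to
prove additivity on the corners `eRe` and `(1 - e)Re`. For `u * e = u` and `e * v = 0` it
follows from the factorisation `u + v = (u + (1 - e)) * (e + v)`. On `eRe`, the defect
`G = Δ (u + v) - Δ u - Δ v` satisfies `G * r * (1 - e) = 0` for every `r`, by comparing the
expansions of `Δ (y * (u + v))` for `y = (1 - e) * star r`, which is additive by the previous
case; since `G = e * G * e`, condition (M3) forces `G = 0`.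
-/

def IsStarReverseDerivable {R : Type*} [Add R] [Mul R] [Star R] (Δ : R → R) : Prop :=
  ∀ a b : R, Δ (a * b) = Δ b * star a + star b * Δ a

section

variable {R : Type*} [Ring R] [StarRing R]

namespace IsStarReverseDerivable

variable {Δ : R → R} (hΔ : IsStarReverseDerivable Δ)
include hΔ

theorem map_zero : Δ 0 = 0 := by
  simpa using hΔ 0 0

theorem map_mul_left_of_isSelfAdjoint {p : R} (hp : IsSelfAdjoint p) (hΔp : Δ p = 0) (x : R) :
    Δ (p * x) = Δ x * p := by
  rw [hΔ, hp.star_eq, hΔp, mul_zero, add_zero]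

theorem map_mul_right_of_isSelfAdjoint {p : R} (hp : IsSelfAdjoint p) (hΔp : Δ p = 0) (x : R) :
    Δ (x * p) = p * Δ x := by
  rw [hΔ, hp.star_eq, hΔp, zero_mul, zero_add]

theorem map_add_sub_sub_mul_star_eq_zero {y u v : R}
    (hadd : Δ (y * u + y * v) = Δ (y * u) + Δ (y * v)) :
    (Δ (u + v) - Δ u - Δ v) * star y = 0 := by
  rw [← mul_add, hΔ, hΔ, hΔ, star_add] at hadd
  linear_combination (norm := noncomm_ring) hadd

variable {e : R} (he : IsStarProjection e) (hΔe : Δ e = 0)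
include he hΔe

theorem map_one_sub : Δ (1 - e) = 0 := by
  have hse := he.isSelfAdjoint
  have hleft : Δ (1 - e) * e = 0 := by
    rw [← hΔ.map_mul_left_of_isSelfAdjoint hse hΔe, he.mul_one_sub_self, hΔ.map_zero]
  have hright : e * Δ (1 - e) = 0 := by
    rw [← hΔ.map_mul_right_of_isSelfAdjoint hse hΔe, he.one_sub_mul_self, hΔ.map_zero]
  have hsq := hΔ (1 - e) (1 - e)
  rw [he.one_sub.isIdempotentElem.eq, he.one_sub.isSelfAdjoint.star_eq, mul_sub, sub_mul,
    hleft, hright, mul_one, one_mul, sub_zero] at hsq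
  exact left_eq_add.mp hsq

theorem map_eq_map_mul_left_add (x : R) : Δ x = Δ (e * x) + Δ ((1 - e) * x) := by
  rw [hΔ.map_mul_left_of_isSelfAdjoint he.isSelfAdjoint hΔe,
    hΔ.map_mul_left_of_isSelfAdjoint he.one_sub.isSelfAdjoint (hΔ.map_one_sub he hΔe),
    ← mul_add, add_sub_cancel, mul_one]

theorem map_eq_map_mul_right_add (x : R) : Δ x = Δ (x * e) + Δ (x * (1 - e)) := by
  rw [hΔ.map_mul_right_of_isSelfAdjoint he.isSelfAdjoint hΔe,
    hΔ.map_mul_right_of_isSelfAdjoint he.one_sub.isSelfAdjoint (hΔ.map_one_sub he hΔe),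
    ← add_mul, add_sub_cancel, one_mul]

theorem map_add_of_mul_eq_self_of_mul_eq_zero {u v : R} (hue : u * e = u) (hev : e * v = 0) :
    Δ (u + v) = Δ u + Δ v := by
  have hse := he.isSelfAdjoint
  have huv : u * v = 0 := by rw [← hue, mul_assoc, hev, mul_zero]
  have hfactor : (u + (1 - e)) * (e + v) = u + v := by
    rw [add_mul, mul_add, mul_add, hue, huv, he.one_sub_mul_self, sub_mul, one_mul, hev,
      sub_zero, add_zero, zero_add]
  have hΔu : Δ (u + (1 - e)) = Δ u := by
    have hmul_e : (u + (1 - e)) * e = u := by rw [add_mul, hue, he.one_sub_mul_self, add_zero]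
    have hmul_compl : (u + (1 - e)) * (1 - e) = 1 - e := by
      rw [add_mul, ← hue, mul_assoc, he.mul_one_sub_self, mul_zero, zero_add,
        he.one_sub.isIdempotentElem.eq]
    rw [hΔ.map_eq_map_mul_right_add he hΔe, hmul_e, hmul_compl, hΔ.map_one_sub he hΔe, add_zero]
  have hΔv : Δ (e + v) = Δ v := by
    have hmul_e : e * (e + v) = e := by rw [mul_add, hev, he.isIdempotentElem.eq, add_zero]
    have hmul_compl : (1 - e) * (e + v) = v := by
      rw [sub_mul, hmul_e, one_mul, add_sub_cancel_left]
    rw [hΔ.map_eq_map_mul_left_add he hΔe, hmul_e, hmul_compl, hΔe, zero_add]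
  have hΔv_e : Δ v * e = 0 := by
    rw [← hΔ.map_mul_left_of_isSelfAdjoint hse hΔe, hev, hΔ.map_zero]
  have he_Δu : e * Δ u = Δ u := by
    rw [← hΔ.map_mul_right_of_isSelfAdjoint hse hΔe, hue]
  have hΔv_star_u : Δ v * star u = 0 := by
    rw [← hue, star_mul, hse.star_eq, ← mul_assoc, hΔv_e, zero_mul]
  have hΔv_compl : Δ v * (1 - e) = Δ v := by rw [mul_sub, hΔv_e, mul_one, sub_zero]
  have hstar_v_Δu : star v * Δ u = 0 := by
    rw [← he_Δu, ← mul_assoc, ← hse.star_eq, ← star_mul, hev, star_zero, zero_mul]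
  rw [← hfactor, hΔ, hΔu, hΔv, star_add, star_add, he.one_sub.isSelfAdjoint.star_eq,
    hse.star_eq, mul_add, add_mul, hΔv_star_u, hΔv_compl, he_Δu, hstar_v_Δu, zero_add, add_zero,
    add_comm]

theorem map_add_of_mem_corner {u v : R} (heu : e * u = u) (hue : u * e = u) (hev : e * v = v)
    (hve : v * e = v) (hM3 : ∀ x : R, (∀ r : R, e * x * e * r * (1 - e) = 0) → e * x * e = 0) :
    Δ (u + v) = Δ u + Δ v := by
  set G := Δ (u + v) - Δ u - Δ v with hG
  have hleft := hΔ.map_mul_left_of_isSelfAdjoint he.isSelfAdjoint hΔe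
  have hright := hΔ.map_mul_right_of_isSelfAdjoint he.isSelfAdjoint hΔe
  have heG : e * G = G := by
    rw [hG, mul_sub, mul_sub, ← hright, ← hright, ← hright, add_mul, hue, hve]
  have hGe : G * e = G := by
    rw [hG, sub_mul, sub_mul, ← hleft, ← hleft, ← hleft, mul_add, heu, hev]
  have hG_compl : ∀ r : R, G * r * (1 - e) = 0 := fun r => by
    have hstar : star ((1 - e) * star r) = r * (1 - e) := by
      rw [star_mul, star_star, he.one_sub.isSelfAdjoint.star_eq]
    rw [mul_assoc, ← hstar]
    refine hΔ.map_add_sub_sub_mul_star_eq_zero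
      (hΔ.map_add_of_mul_eq_self_of_mul_eq_zero he hΔe (by rw [mul_assoc, hue]) ?_)
    rw [← mul_assoc, ← mul_assoc, he.mul_one_sub_self, zero_mul, zero_mul]
  have hG0 := hM3 G fun r => by rw [heG, hGe, hG_compl]
  rwa [heG, hGe, hG, sub_sub, sub_eq_zero] at hG0

theorem map_add_of_mul_eq_self {a b : R} (hae : a * e = a) (hbe : b * e = b)
    (hM3 : ∀ x : R, (∀ r : R, e * x * e * r * (1 - e) = 0) → e * x * e = 0) :
    Δ (a + b) = Δ a + Δ b := by
  have he_mul_e : ∀ x : R, e * (e * x) = e * x := fun x => by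
    rw [← mul_assoc, he.isIdempotentElem.eq]
  have he_mul_compl : ∀ x : R, e * ((1 - e) * x) = 0 := fun x => by
    rw [← mul_assoc, he.mul_one_sub_self, zero_mul]
  calc Δ (a + b) = Δ (e * a + e * b) + Δ ((1 - e) * a + (1 - e) * b) := by
        rw [← mul_add, ← mul_add, ← hΔ.map_eq_map_mul_left_add he hΔe]
    _ = Δ (e * a) + Δ (e * b) + (Δ ((1 - e) * a) + Δ ((1 - e) * b)) := by
        rw [hΔ.map_add_of_mem_corner he hΔe (he_mul_e a) (by rw [mul_assoc, hae]) (he_mul_e b)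
            (by rw [mul_assoc, hbe]) hM3,
          hΔ.map_add_of_mul_eq_self_of_mul_eq_zero he hΔe (by rw [mul_assoc, hae])
            (he_mul_compl b)]
    _ = Δ a + Δ b := by
        rw [hΔ.map_eq_map_mul_left_add he hΔe a, hΔ.map_eq_map_mul_left_add he hΔe b]
        abel

end IsStarReverseDerivable

end

theorem delta_additive_on_Re_general {R : Type*} [Ring R]
    (σ : R → R)
    (hσadd : ∀ x y : R, σ (x + y) = σ x + σ y)
    (hσinv : ∀ x : R, σ (σ x) = x)
    (hσmul : ∀ x y : R, σ (x * y) = σ y * σ x)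
    (e : R) (he : e * e = e) (hes : σ e = e)
    (hM3 : ∀ x : R, (∀ r : R, e * x * e * r * (1 - e) = 0) → e * x * e = 0)
    (Δ : R → R)
    (hΔ : ∀ a b : R, Δ (a * b) = Δ b * σ a + σ b * Δ a)
    (hΔe : Δ e = 0) :
    ∀ a b : R, a = a * e → b = b * e → Δ (a + b) = Δ a + Δ b := by
  let _ : StarRing R :=
    { star := σ, star_involutive := hσinv, star_mul := hσmul, star_add := hσadd }
  have hΔ' : IsStarReverseDerivable Δ := hΔ
  have he' : IsStarProjection e := ⟨he, hes⟩
  intro a b ha hb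
  exact hΔ'.map_add_of_mul_eq_self he' hΔe ha.symm hb.symm hM3

theorem delta_additive_on_Re {R : Type*} [Ring R]
    (σ : R → R)
    (hσadd : ∀ x y : R, σ (x + y) = σ x + σ y)
    (hσinv : ∀ x : R, σ (σ x) = x)
    (hσmul : ∀ x y : R, σ (x * y) = σ y * σ x)
    (e : R) (he : e * e = e) (hes : σ e = e) (he0 : e ≠ 0) (he1 : e ≠ 1)
    (hM1 : ∀ x : R, (∀ r : R, x * r = 0) → x = 0)
    (hM3 : ∀ x : R, (∀ r : R, e * x * e * r * (1 - e) = 0) → e * x * e = 0)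
    (Δ : R → R)
    (hΔ : ∀ a b : R, Δ (a * b) = Δ b * σ a + σ b * Δ a)
    (hΔe : Δ e = 0) :
    ∀ a b : R, a = a * e → b = b * e → Δ (a + b) = Δ a + Δ b :=
  delta_additive_on_Re_general σ hσadd hσinv hσmul e he hes hM3 Δ hΔ hΔe
end
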